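/- arXiv:2302.03327 — 4 statements merged into one kernel-verified Lean document; each statement's English description precedes it below -/
import Mathlib

section
/- Let X be a finite set, G ⊂ P(X), k a positive integer, and q ∈ [0,1]. Define H = ⋃_{S ∈ G} Ψ(S), where Ψ(S) is the set of minimal preimages of S under the projection π : X × [k] → X. Then cost_{q/k}(H) = cost_q(G), where cost_r(A) = Σ_{S ∈ A} r^{|S|}. -/
open Finset

variable {α : Type*}

/-- Probability that a `p`-random subset of a finite type `α` lies in the family `F`. -/
noncomputable def probMem [Fintype α] [DecidableEq α] (p : ℝ) (F : Finset (Finset α)) : ℝ :=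
  ∑ A ∈ F, p ^ A.card * (1 - p) ^ (Fintype.card α - A.card)

/-- `F` is an increasing family (up-set). -/
def IncreasingFam [DecidableEq α] (F : Finset (Finset α)) : Prop :=
  ∀ A ∈ F, ∀ B : Finset α, A ⊆ B → B ∈ F

/-- `F` is non-trivial: not empty and not all of `P(X)`. -/
def NontrivialFam [Fintype α] [DecidableEq α] (F : Finset (Finset α)) : Prop :=
  F ≠ ∅ ∧ F ≠ Finset.univ

/-- The `q`-cost of a family `G`. -/
noncomputable def cost [DecidableEq α] (q : ℝ) (G : Finset (Finset α)) : ℝ :=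
  ∑ S ∈ G, q ^ S.card

/-- `G` covers `F`: every member of `F` contains some member of `G`. -/
def Covers [DecidableEq α] (G F : Finset (Finset α)) : Prop :=
  ∀ A ∈ F, ∃ S ∈ G, S ⊆ A

/-- The expectation threshold of `F`. -/
noncomputable def qc [Fintype α] [DecidableEq α] (F : Finset (Finset α)) : ℝ :=
  sSup {q : ℝ | q ∈ Set.Icc (0 : ℝ) 1 ∧
    ∃ G : Finset (Finset α), Covers G F ∧ cost q G ≤ 1 / 2}

/-- The `k`-cloned family `F_k ⊂ P(X × [k])`. -/
def clone [Fintype α] [DecidableEq α] (k : ℕ) (F : Finset (Finset α)) :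
    Finset (Finset (α × Fin k)) :=
  Finset.univ.filter (fun S => S.image Prod.fst ∈ F)

/-- `Ψ(S)`: minimal preimages of `S` under the projection `π : X × [k] → X`. -/
def Psi [Fintype α] [DecidableEq α] (k : ℕ) (S : Finset α) :
    Finset (Finset (α × Fin k)) :=
  Finset.univ.filter (fun S' => S'.image Prod.fst = S ∧ S'.card = S.card)

/-- `l(F)`: the size of a largest minimal element of `F`. -/
def ell [Fintype α] [DecidableEq α] (F : Finset (Finset α)) : ℕ :=
  (F.filter (fun A => ∀ B ⊂ A, B ∉ F)).sup Finset.card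


lemma psi_card [Fintype α] [DecidableEq α] (k : ℕ) (S : Finset α) :
    (Psi k S).card = k ^ S.card := by
  have := Finset.card_bij
    (s := S.pi (fun _ => (Finset.univ : Finset (Fin k)))) (t := Psi k S)
    (fun f _ => S.attach.image (fun a => (a.1, f a.1 a.2)))
    ?_ ?_ ?_
  · rw [← this, Finset.card_pi, Finset.prod_const, Finset.card_univ, Fintype.card_fin]
  · intro f hf
    have hinj : Set.InjOn (fun a : {x // x ∈ S} => (a.1, f a.1 a.2)) S.attach := by
      intro a _ b _ hab
      exact Subtype.ext (congrArg Prod.fst hab)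
    simp only [Psi, Finset.mem_filter, Finset.mem_univ, true_and]
    constructor
    · ext x
      simp only [Finset.mem_image, Finset.mem_attach, true_and, Subtype.exists]
      constructor
      · rintro ⟨p, ⟨a, ha, rfl⟩, rfl⟩; exact ha
      · intro hx; exact ⟨(x, f x hx), ⟨x, hx, rfl⟩, rfl⟩
    · rw [Finset.card_image_of_injOn hinj, Finset.card_attach]
  · intro f hf g hg hfg
    funext a ha
    have : (a, f a ha) ∈ S.attach.image (fun b : {x // x ∈ S} => (b.1, g b.1 b.2)) := by
      rw [← hfg]
      exact Finset.mem_image.2 ⟨⟨a, ha⟩, Finset.mem_attach _ _, rfl⟩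
    obtain ⟨b, _, hb⟩ := Finset.mem_image.1 this
    obtain ⟨h1, h2⟩ := Prod.mk.injEq .. ▸ hb
    subst h1
    exact h2.symm
  · intro S' hS'
    simp only [Psi, Finset.mem_filter, Finset.mem_univ, true_and] at hS'
    obtain ⟨him, hcard⟩ := hS'
    have hinj : Set.InjOn Prod.fst (S' : Set (α × Fin k)) := by
      apply Finset.injOn_of_card_image_eq
      rw [him, hcard]
    have hex : ∀ a ∈ S, ∃! p, p ∈ S' ∧ p.1 = a := by
      intro a ha
      rw [← him] at ha
      obtain ⟨p, hp, hpa⟩ := Finset.mem_image.1 ha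
      exact ⟨p, ⟨hp, hpa⟩, fun q ⟨hq1, hq2⟩ => hinj hq1 hp (hq2.trans hpa.symm)⟩
    refine ⟨fun a ha => (Finset.choose _ S' (hex a ha)).2, Finset.mem_pi.2 fun _ _ => Finset.mem_univ _, ?_⟩
    have hsub : S.attach.image
        (fun a : {x // x ∈ S} => (a.1, (Finset.choose (fun p => p.1 = a.1) S' (hex a.1 a.2)).2)) ⊆ S' := by
      intro x hx
      obtain ⟨a, _, rfl⟩ := Finset.mem_image.1 hx
      have h1 := Finset.choose_mem (fun p => p.1 = a.1) S' (hex a.1 a.2)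
      have h2 := Finset.choose_property (fun p => p.1 = a.1) S' (hex a.1 a.2)
      have : ((Finset.choose (fun p => p.1 = a.1) S' (hex a.1 a.2)).1,
          (Finset.choose (fun p => p.1 = a.1) S' (hex a.1 a.2)).2) ∈ S' := by
        simpa using h1
      rwa [h2] at this
    apply Finset.eq_of_subset_of_card_le hsub
    rw [hcard]
    have hinj2 : Set.InjOn
        (fun a : {x // x ∈ S} => (a.1, (Finset.choose (fun p => p.1 = a.1) S' (hex a.1 a.2)).2))
        S.attach := fun a _ b _ hab => Subtype.ext (congrArg Prod.fst hab)
    rw [Finset.card_image_of_injOn hinj2, Finset.card_attach]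

theorem stmt6 [Fintype α] [DecidableEq α] (G : Finset (Finset α)) (k : ℕ)
    (hk : 0 < k) (q : ℝ) (hq : q ∈ Set.Icc (0 : ℝ) 1) :
    cost (q / k) (G.biUnion (fun S => Psi k S)) = cost q G := by
  classical
  have hdisj : ∀ S ∈ G, ∀ T ∈ G, S ≠ T → Disjoint (Psi k S) (Psi k T) := by
    intro S _ T _ hST
    rw [Finset.disjoint_left]
    intro A hA hA'
    simp only [Psi, Finset.mem_filter] at hA hA'
    exact hST (hA.2.1 ▸ hA'.2.1)
  rw [cost, Finset.sum_biUnion hdisj]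
  apply Finset.sum_congr rfl
  intro S _
  have hcards : ∀ S' ∈ Psi k S, S'.card = S.card := by
    intro S' hS'
    simp only [Psi, Finset.mem_filter] at hS'
    exact hS'.2.2
  calc ∑ S' ∈ Psi k S, (q / k) ^ S'.card
      = ∑ _S' ∈ Psi k S, (q / k) ^ S.card := Finset.sum_congr rfl (fun S' h => by rw [hcards S' h])
    _ = (Psi k S).card * (q / k) ^ S.card := by rw [Finset.sum_const, nsmul_eq_mul]
    _ = q ^ S.card := by
        rw [psi_card, Nat.cast_pow, ← mul_pow]
        congr 1
        field_simp
end

section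
/- Let F be a non-trivial increasing family of subsets of a finite set X and k a positive integer. Then q_c(F_k) ≥ q_c(F)/k, where q_c denotes the expectation threshold and F_k the k-cloned family. -/
open Finset

variable {α : Type*}

/-! Each set `S` of a `q`-cheap cover of `F` lifts to the members of `Ψ(S)`, the graphs of maps
`S → [k]`; there are at most `k ^ |S|` of them, each of size `|S|`, so at level `q / k` they cost
at most `q ^ |S|` together. Since every member of `F_k` projects onto a member of `F`, the lifts
cover `F_k`, which gives a `q / k`-cheap cover of `F_k`. -/

lemma cost_biUnion_le {β γ : Type*} [DecidableEq γ] {r : ℝ} (hr : 0 ≤ r) (s : Finset β)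
    (t : β → Finset (Finset γ)) : cost r (s.biUnion t) ≤ ∑ b ∈ s, cost r (t b) := by
  have h : s.biUnion t = (s.sigma t).image Sigma.snd := by
    ext; simp
  rw [h, cost]
  refine (sum_image_le_of_nonneg fun _ _ => pow_nonneg hr _).trans_eq ?_
  rw [sum_sigma]
  rfl

lemma le_qc [Fintype α] [DecidableEq α] {F G : Finset (Finset α)} {q : ℝ}
    (hq : q ∈ Set.Icc (0 : ℝ) 1) (hG : Covers G F) (hcost : cost q G ≤ 1 / 2) : q ≤ qc F :=
  le_csSup ⟨1, fun _ h => h.1.2⟩ ⟨hq, G, hG, hcost⟩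

lemma qc_nonneg [Fintype α] [DecidableEq α] (F : Finset (Finset α)) : 0 ≤ qc F :=
  Real.sSup_nonneg fun _ h => h.1.1

def graphFinset {k : ℕ} (S : Finset α) (f : S → Fin k) : Finset (α × Fin k) :=
  univ.map ⟨fun a => (a.1, f a), fun _ _ h => Subtype.ext (congrArg Prod.fst h)⟩

lemma card_graphFinset {k : ℕ} (S : Finset α) (f : S → Fin k) :
    (graphFinset S f).card = S.card := by
  simp [graphFinset]

section Cloning

variable [DecidableEq α] {k : ℕ}

lemma image_fst_graphFinset (S : Finset α) (f : S → Fin k) :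
    (graphFinset S f).image Prod.fst = S := by
  ext a
  simp only [graphFinset, mem_image, mem_map, mem_univ, true_and]
  exact ⟨fun ⟨_, ⟨b, rfl⟩, h⟩ => h ▸ b.2, fun ha => ⟨_, ⟨⟨a, ha⟩, rfl⟩, rfl⟩⟩

lemma exists_graphFinset_subset {S : Finset α} {T : Finset (α × Fin k)}
    (hS : S ⊆ T.image Prod.fst) : ∃ f : S → Fin k, graphFinset S f ⊆ T := by
  have h : ∀ a : S, ∃ i, (a.1, i) ∈ T := fun a => by
    simpa using hS a.2
  choose f hf using h
  refine ⟨f, fun p hp => ?_⟩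
  obtain ⟨a, -, rfl⟩ := mem_map.1 hp
  exact hf a

variable [Fintype α]

lemma mem_Psi {S : Finset α} {T : Finset (α × Fin k)} :
    T ∈ Psi k S ↔ T.image Prod.fst = S ∧ T.card = S.card := by
  simp [Psi]

lemma graphFinset_mem_Psi (S : Finset α) (f : S → Fin k) : graphFinset S f ∈ Psi k S :=
  mem_Psi.2 ⟨image_fst_graphFinset S f, card_graphFinset S f⟩

lemma Psi_subset_image_graphFinset (S : Finset α) :
    Psi k S ⊆ univ.image (graphFinset S) := by
  intro T hT
  obtain ⟨himage, hcard⟩ := mem_Psi.1 hT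
  obtain ⟨f, hf⟩ := exists_graphFinset_subset himage.symm.subset
  refine mem_image.2 ⟨f, mem_univ _, eq_of_subset_of_card_le hf ?_⟩
  rw [hcard, card_graphFinset]

lemma card_Psi_le (S : Finset α) : (Psi k S).card ≤ k ^ S.card :=
  calc (Psi k S).card ≤ (univ.image (graphFinset S)).card :=
        card_le_card (Psi_subset_image_graphFinset S)
    _ ≤ Fintype.card (S → Fin k) := card_image_le
    _ = k ^ S.card := by simp

lemma cost_Psi_le {r : ℝ} (hr : 0 ≤ r) (S : Finset α) :
    cost r (Psi k S) ≤ (k * r) ^ S.card := by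
  have hcard : ∀ T ∈ Psi k S, r ^ T.card = r ^ S.card := fun T hT => by
    rw [(mem_Psi.1 hT).2]
  calc cost r (Psi k S) = (Psi k S).card * r ^ S.card := by
        rw [cost, sum_congr rfl hcard, sum_const, nsmul_eq_mul]
    _ ≤ (k : ℝ) ^ S.card * r ^ S.card := by
        gcongr
        exact_mod_cast card_Psi_le S
    _ = (k * r) ^ S.card := (mul_pow _ _ _).symm

lemma cost_biUnion_Psi_le {r : ℝ} (hr : 0 ≤ r) (G : Finset (Finset α)) :
    cost r (G.biUnion (Psi k)) ≤ cost (k * r) G :=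
  (cost_biUnion_le hr G (Psi k)).trans (sum_le_sum fun S _ => cost_Psi_le hr S)

lemma Covers.biUnion_Psi {G F : Finset (Finset α)} (h : Covers G F) :
    Covers (G.biUnion (Psi k)) (clone k F) := by
  intro T hT
  obtain ⟨S, hSG, hST⟩ := h _ (by simpa [clone] using hT)
  obtain ⟨f, hf⟩ := exists_graphFinset_subset hST
  exact ⟨graphFinset S f, mem_biUnion.2 ⟨S, hSG, graphFinset_mem_Psi S f⟩, hf⟩

end Cloning

theorem stmt8_general [Fintype α] [DecidableEq α] (F : Finset (Finset α))
    (k : ℕ) (hk : 0 < k) :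
    qc (clone k F) ≥ qc F / k := by
  have hk' : (0 : ℝ) < k := by exact_mod_cast hk
  rw [ge_iff_le, qc, div_eq_inv_mul, ← smul_eq_mul, ← Real.sSup_smul_of_nonneg (by positivity)]
  refine Real.sSup_le ?_ (qc_nonneg _)
  rintro _ ⟨q, ⟨⟨hq0, hq1⟩, G, hcov, hcost⟩, rfl⟩
  refine le_qc ⟨by positivity, ?_⟩ hcov.biUnion_Psi ?_
  · exact (inv_mul_le_iff₀ hk').2 (by simpa using hq1.trans (Nat.one_le_cast.2 hk))
  · calc cost ((k : ℝ)⁻¹ * q) (G.biUnion (Psi k)) ≤ cost (k * ((k : ℝ)⁻¹ * q)) G :=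
          cost_biUnion_Psi_le (by positivity) G
      _ = cost q G := by rw [mul_inv_cancel_left₀ hk'.ne']
      _ ≤ 1 / 2 := hcost

theorem stmt8 [Fintype α] [DecidableEq α] (F : Finset (Finset α))
    (hinc : IncreasingFam F) (hnt : NontrivialFam F) (k : ℕ) (hk : 0 < k) :
    qc (clone k F) ≥ qc F / k :=
  stmt8_general F k hk
end

section
/- Let X be a finite set, k a positive integer, q ∈ [0,1], and H ⊂ P(X × [k]). Then Σ_{X' ∈ Ψ(X)} cost_{kq}(H ∩ P(X')) ≤ k^{|X|} · cost_q(H), where Ψ(X) = {X' ⊂ X × [k] : π(X') = X, |X'| = |X|} and cost_r(A) = Σ_{S∈A} r^{|S|}. -/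
open Finset

variable {α : Type*}

section Aux
variable [Fintype α] [DecidableEq α] {k : ℕ}

lemma psi_mem {X' : Finset (α × Fin k)} (h : X' ∈ Psi k (univ : Finset α)) :
    X'.image Prod.fst = univ ∧ X'.card = Fintype.card α := by
  unfold Psi at h
  rw [Finset.mem_filter] at h
  exact ⟨h.2.1, by rw [h.2.2, Finset.card_univ]⟩

lemma psi_injOn {X' : Finset (α × Fin k)} (h : X' ∈ Psi k (univ : Finset α)) :
    Set.InjOn Prod.fst (X' : Set (α × Fin k)) := by
  obtain ⟨h1, h2⟩ := psi_mem h
  rw [← Finset.card_image_iff, h1, Finset.card_univ, h2]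

noncomputable def extrF (hk : 0 < k) (X' : Finset (α × Fin k)) (a : α) : Fin k :=
  if h : ∃ b, (a, b) ∈ X' then h.choose else ⟨0, hk⟩

lemma extrF_mem (hk : 0 < k) {X' : Finset (α × Fin k)} {a : α}
    (h : ∃ b, (a, b) ∈ X') : (a, extrF hk X' a) ∈ X' := by
  rw [extrF, dif_pos h]; exact h.choose_spec

lemma extrF_eq (hk : 0 < k) {X' : Finset (α × Fin k)}
    (hX : X' ∈ Psi k (univ : Finset α)) {p : α × Fin k} (hp : p ∈ X') :
    extrF hk X' p.1 = p.2 := by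
  have h : ∃ b, (p.1, b) ∈ X' := ⟨p.2, hp⟩
  have hm := extrF_mem hk h
  have heq : (p.1, extrF hk X' p.1) = p :=
    psi_injOn hX (Finset.mem_coe.2 hm) (Finset.mem_coe.2 hp) rfl
  exact congrArg Prod.snd heq

lemma exists_snd {X' : Finset (α × Fin k)} (hX : X' ∈ Psi k (univ : Finset α)) (a : α) :
    ∃ b, (a, b) ∈ X' := by
  have h1 := (psi_mem hX).1
  have : a ∈ X'.image Prod.fst := by rw [h1]; exact mem_univ a
  obtain ⟨p, hp, hpa⟩ := Finset.mem_image.1 this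
  exact ⟨p.2, by rwa [← hpa, Prod.mk.eta]⟩

lemma count_le (hk : 0 < k) (S : Finset (α × Fin k))
    (hA : (S.image Prod.fst).card = S.card) :
    ((Psi k (univ : Finset α)).filter (fun X' => S ⊆ X')).card
      ≤ k ^ (Fintype.card α - S.card) := by
  classical
  set A := S.image Prod.fst with hAdef
  have key : ∀ X' ∈ (Psi k (univ : Finset α)).filter (fun X' => S ⊆ X'),
      ∀ Y' ∈ (Psi k (univ : Finset α)).filter (fun X' => S ⊆ X'),
      (∀ x : {a : α // a ∈ Aᶜ}, extrF hk X' x.1 = extrF hk Y' x.1) → X' ⊆ Y' := by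
    intro X' hX' Y' hY' heq
    rw [mem_filter] at hX' hY'
    obtain ⟨hX, hSX⟩ := hX'
    obtain ⟨hY, hSY⟩ := hY'
    intro p hp
    by_cases ha : p.1 ∈ A
    · obtain ⟨p', hp'S, hp'a⟩ := Finset.mem_image.1 ha
      have hp'X : p' ∈ X' := hSX hp'S
      have : p' = p := psi_injOn hX (by exact_mod_cast hp'X) (by exact_mod_cast hp) hp'a
      exact hSY (this ▸ hp'S)
    · have h1 : extrF hk X' p.1 = p.2 := extrF_eq hk hX hp
      have h2 : extrF hk Y' p.1 = p.2 := by
        rw [← heq ⟨p.1, Finset.mem_compl.2 ha⟩, h1]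
      have := extrF_mem hk (exists_snd hY p.1)
      rwa [h2, Prod.mk.eta] at this
  have hinj : Set.InjOn (fun X' (x : {a : α // a ∈ Aᶜ}) => extrF hk X' x.1)
      ((Psi k (univ : Finset α)).filter (fun X' => S ⊆ X') : Set (Finset (α × Fin k))) := by
    intro X' hX' Y' hY' h
    have h' : ∀ x : {a : α // a ∈ Aᶜ}, extrF hk X' x.1 = extrF hk Y' x.1 :=
      fun x => congrFun h x
    have h'' : ∀ x : {a : α // a ∈ Aᶜ}, extrF hk Y' x.1 = extrF hk X' x.1 :=
      fun x => (h' x).symm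
    exact Finset.Subset.antisymm (key _ (by exact_mod_cast hX') _ (by exact_mod_cast hY') h')
      (key _ (by exact_mod_cast hY') _ (by exact_mod_cast hX') h'')
  calc ((Psi k (univ : Finset α)).filter (fun X' => S ⊆ X')).card
      ≤ Fintype.card ({a : α // a ∈ Aᶜ} → Fin k) := by
        rw [← Finset.card_univ]
        exact Finset.card_le_card_of_injOn _ (fun _ _ => mem_univ _) hinj
    _ = k ^ (Fintype.card α - S.card) := by
        rw [Fintype.card_fun, Fintype.card_fin, Fintype.card_coe, Finset.card_compl, hA]

end Aux

theorem stmt9 [Fintype α] [DecidableEq α] (k : ℕ) (hk : 0 < k)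
    (q : ℝ) (hq : q ∈ Set.Icc (0 : ℝ) 1) (H : Finset (Finset (α × Fin k))) :
    ∑ X' ∈ Psi k (Finset.univ : Finset α),
        cost ((k : ℝ) * q) (H.filter (fun S => S ⊆ X'))
      ≤ (k : ℝ) ^ (Fintype.card α) * cost q H := by
  classical
  obtain ⟨hq0, hq1⟩ := hq
  simp only [cost, Finset.sum_filter]
  rw [Finset.sum_comm, Finset.mul_sum]
  refine Finset.sum_le_sum fun S hS => ?_
  have hrw : ∑ X' ∈ Psi k (univ : Finset α), (if S ⊆ X' then ((k : ℝ) * q) ^ S.card else 0)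
      = (((Psi k (univ : Finset α)).filter (fun X' => S ⊆ X')).card : ℝ)
        * ((k : ℝ) * q) ^ S.card := by
    rw [← Finset.sum_filter, Finset.sum_const, nsmul_eq_mul]
  rw [hrw]
  set c := ((Psi k (univ : Finset α)).filter (fun X' => S ⊆ X')).card with hc
  by_cases hc0 : c = 0
  · rw [hc0]
    simp only [Nat.cast_zero, zero_mul]
    positivity
  · obtain ⟨X', hX'⟩ := Finset.card_pos.1 (Nat.pos_of_ne_zero hc0)
    rw [Finset.mem_filter] at hX'
    obtain ⟨hXP, hSX⟩ := hX'
    -- S injective on fst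
    have hA : (S.image Prod.fst).card = S.card :=
      Finset.card_image_of_injOn ((psi_injOn hXP).mono (by exact_mod_cast hSX))
    have hcle : c ≤ k ^ (Fintype.card α - S.card) := count_le hk S hA
    have hsle : S.card ≤ Fintype.card α := by
      calc S.card ≤ X'.card := Finset.card_le_card hSX
        _ = Fintype.card α := (psi_mem hXP).2
    have hqs : (0:ℝ) ≤ q ^ S.card := by positivity
    calc (c : ℝ) * ((k : ℝ) * q) ^ S.card
        = (c : ℝ) * (k : ℝ) ^ S.card * q ^ S.card := by ring
      _ ≤ ((k : ℝ) ^ (Fintype.card α - S.card)) * (k : ℝ) ^ S.card * q ^ S.card := by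
          apply mul_le_mul_of_nonneg_right _ hqs
          apply mul_le_mul_of_nonneg_right _ (by positivity)
          exact_mod_cast hcle
      _ = (k : ℝ) ^ (Fintype.card α) * q ^ S.card := by
          rw [← pow_add, Nat.sub_add_cancel hsle]
end

section
/- Assume the Park–Pham theorem: there is a constant K such that for every finite set X and non-trivial increasing family F with l(F) ≥ 2, p_c(F) ≤ K q_c(F) log₂ l(F). Then for every such F, p_c(F) ≤ 1 - e^{-K q_c(F) log₂ l(F)}. -/
open Finset

variable {α : Type*}

lemma binom_sum (r : ℝ) (k : ℕ) :
    ∑ T : Finset (Fin k), r ^ T.card * (1 - r) ^ (k - T.card) = 1 := by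
  have h1 : ∑ T : Finset (Fin k), r ^ T.card * (1 - r) ^ (k - T.card)
      = ∑ m ∈ Finset.range (k + 1), (k.choose m) • (r ^ m * (1 - r) ^ (k - m)) := by
    rw [← Finset.powerset_univ]
    rw [Finset.sum_powerset_apply_card (fun n => r ^ n * (1 - r) ^ (k - n))]
    simp
  rw [h1]
  have h2 := add_pow r (1 - r) k
  simp only [add_sub_cancel, one_pow] at h2
  conv_rhs => rw [h2]
  apply Finset.sum_congr rfl
  intro m _
  push_cast [nsmul_eq_mul]
  ring

lemma fiber_sum [Fintype α] [DecidableEq α] (k : ℕ) (A : Finset α) (r : ℝ) :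
    ∑ S' ∈ Finset.univ.filter (fun S' : Finset (α × Fin k) => S'.image Prod.fst = A),
      r ^ S'.card * (1 - r) ^ (Fintype.card α * k - S'.card)
    = (1 - (1 - r) ^ k) ^ A.card * ((1 - r) ^ k) ^ (Fintype.card α - A.card) := by
  classical
  set h : α → Finset (Fin k) → ℝ :=
    fun a T => if (T.Nonempty ↔ a ∈ A) then r ^ T.card * (1 - r) ^ (k - T.card) else 0 with hh
  -- right side as a product of sums
  have hsumT : ∀ a : α, (∑ T : Finset (Fin k), h a T)
      = if a ∈ A then 1 - (1 - r) ^ k else (1 - r) ^ k := by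
    intro a
    by_cases ha : a ∈ A
    · simp only [ha, iff_true, if_true, hh]
      have : ∑ T : Finset (Fin k), (if T.Nonempty then r ^ T.card * (1 - r) ^ (k - T.card) else 0)
          = (∑ T : Finset (Fin k), r ^ T.card * (1 - r) ^ (k - T.card))
            - (∑ T : Finset (Fin k), if T = ∅ then r ^ T.card * (1 - r) ^ (k - T.card) else 0) := by
        rw [← Finset.sum_sub_distrib]
        apply Finset.sum_congr rfl
        intro T _
        rcases T.eq_empty_or_nonempty with hT | hT
        · simp [hT]
        · simp [hT, hT.ne_empty]
      rw [this, binom_sum]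
      simp
    · simp only [ha, iff_false, hh]
      have : ∀ T : Finset (Fin k), (if ¬ T.Nonempty then r ^ T.card * (1 - r) ^ (k - T.card) else 0)
          = if T = ∅ then r ^ T.card * (1 - r) ^ (k - T.card) else 0 := by
        intro T
        rcases T.eq_empty_or_nonempty with hT | hT
        · simp [hT]
        · simp [hT, hT.ne_empty]
      simp only [this]
      simp
  have hRHS : (1 - (1 - r) ^ k) ^ A.card * ((1 - r) ^ k) ^ (Fintype.card α - A.card)
      = ∏ a : α, (∑ T : Finset (Fin k), h a T) := by
    simp only [hsumT]
    rw [Finset.prod_ite, Finset.prod_const, Finset.prod_const]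
    congr 1
    · congr 1
      simp [Finset.filter_univ_mem]
    · congr 1
      simp [Finset.filter_not, Finset.filter_univ_mem, Finset.card_sdiff_of_subset (Finset.subset_univ A),
        Finset.card_univ]
  rw [hRHS]
  have hps : (∏ a : α, ∑ T : Finset (Fin k), h a T)
      = ∑ f ∈ Fintype.piFinset (fun _ : α => (Finset.univ : Finset (Finset (Fin k)))),
          ∏ a : α, h a (f a) := by
    rw [Finset.prod_univ_sum]
  rw [hps, Fintype.piFinset_univ]
  have hdrop : ∑ f ∈ (Finset.univ : Finset (α → Finset (Fin k))), ∏ a : α, h a (f a)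
      = ∑ f ∈ Finset.univ.filter (fun f : α → Finset (Fin k) => ∀ a, (f a).Nonempty ↔ a ∈ A),
          ∏ a : α, h a (f a) := by
    rw [Finset.sum_filter_of_ne]
    intro f _ hne a
    by_contra ha
    exact hne (Finset.prod_eq_zero (Finset.mem_univ a) (by simp only [hh, if_neg ha]))
  rw [hdrop]
  apply Finset.sum_nbij' (i := fun S' : Finset (α × Fin k) =>
      fun a => Finset.univ.filter (fun j : Fin k => (a, j) ∈ S'))
    (j := fun f : α → Finset (Fin k) =>
      Finset.univ.filter (fun x : α × Fin k => x.2 ∈ f x.1))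
  · -- hi : membership
    intro S' hS'
    simp only [Finset.mem_filter, Finset.mem_univ, true_and] at hS' ⊢
    intro a
    constructor
    · rintro ⟨j, hj⟩
      simp only [Finset.mem_filter, Finset.mem_univ, true_and] at hj
      rw [← hS']
      exact Finset.mem_image_of_mem _ hj
    · intro ha
      rw [← hS'] at ha
      obtain ⟨x, hx, hxa⟩ := Finset.mem_image.mp ha
      exact ⟨x.2, by simp only [Finset.mem_filter, Finset.mem_univ, true_and]; rwa [← hxa]⟩
  · -- hj
    intro f hf
    simp only [Finset.mem_filter, Finset.mem_univ, true_and] at hf ⊢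
    ext a
    simp only [Finset.mem_image, Finset.mem_filter, Finset.mem_univ, true_and]
    rw [← hf a]
    constructor
    · rintro ⟨x, hx, hxa⟩
      exact ⟨x.2, by rwa [← hxa]⟩
    · rintro ⟨j, hj⟩
      exact ⟨(a, j), hj, rfl⟩
  · -- left inverse
    intro S' _
    ext x
    simp
  · -- right inverse
    intro f _
    funext a
    ext j
    simp
  · -- values
    intro S' hS'
    simp only [Finset.mem_filter, Finset.mem_univ, true_and] at hS'
    have hcond : ∀ a : α,
        ((Finset.univ.filter (fun j : Fin k => (a, j) ∈ S')).Nonempty ↔ a ∈ A) := by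
      intro a
      constructor
      · rintro ⟨j, hj⟩
        simp only [Finset.mem_filter, Finset.mem_univ, true_and] at hj
        rw [← hS']
        exact Finset.mem_image_of_mem _ hj
      · intro ha
        rw [← hS'] at ha
        obtain ⟨x, hx, hxa⟩ := Finset.mem_image.mp ha
        exact ⟨x.2, by simp only [Finset.mem_filter, Finset.mem_univ, true_and]; rwa [← hxa]⟩
    have hval : ∀ a : α, h a (Finset.univ.filter (fun j : Fin k => (a, j) ∈ S'))
        = r ^ (Finset.univ.filter (fun j : Fin k => (a, j) ∈ S')).card
          * (1 - r) ^ (k - (Finset.univ.filter (fun j : Fin k => (a, j) ∈ S')).card) := by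
      intro a
      simp only [hh, if_pos (hcond a)]
    simp only [hval]
    -- fiber cards
    set c : α → ℕ := fun a => (Finset.univ.filter (fun j : Fin k => (a, j) ∈ S')).card with hc
    have hcard : S'.card = ∑ a : α, c a := by
      rw [Finset.card_eq_sum_card_fiberwise (f := Prod.fst) (t := Finset.univ) (fun x _ => Finset.mem_univ _)]
      apply Finset.sum_congr rfl
      intro a _
      apply Finset.card_nbij (fun x => x.2)
      · intro x hx
        simp only [Finset.mem_coe, Finset.mem_filter] at hx ⊢
        refine ⟨Finset.mem_univ _, ?_⟩
        have hxx : x = (a, x.2) := by rw [← hx.2]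
        exact hxx ▸ hx.1
      · intro x hx y hy hxy
        simp only [Finset.coe_filter, Set.mem_setOf_eq] at hx hy
        exact Prod.ext (hx.2.trans hy.2.symm) hxy
      · intro j hj
        simp only [Finset.coe_filter, Finset.mem_univ, true_and, Set.mem_setOf_eq] at hj
        exact ⟨(a, j), by simp [hj], rfl⟩
    have hck : ∀ a : α, c a ≤ k := by
      intro a
      simpa using Finset.card_filter_le Finset.univ (fun j : Fin k => (a, j) ∈ S')
    rw [Finset.prod_mul_distrib, Finset.prod_pow_eq_pow_sum, Finset.prod_pow_eq_pow_sum]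
    rw [← hcard]
    congr 2
    rw [Finset.sum_tsub_distrib _ (fun a _ => hck a)]
    simp [hcard, Finset.card_univ, mul_comm]

lemma probMem_clone [Fintype α] [DecidableEq α] (k : ℕ) (F : Finset (Finset α)) (r : ℝ) :
    probMem r (clone k F) = probMem (1 - (1 - r) ^ k) F := by
  classical
  unfold probMem clone
  have hcard : Fintype.card (α × Fin k) = Fintype.card α * k := by
    simp [Fintype.card_prod]
  rw [hcard]
  rw [← Finset.sum_fiberwise_of_maps_to (g := fun S' : Finset (α × Fin k) => S'.image Prod.fst)
    (t := F) (fun S' hS' => (Finset.mem_filter.mp hS').2)]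
  apply Finset.sum_congr rfl
  intro A hA
  have hfilter : (Finset.univ.filter (fun S : Finset (α × Fin k) => S.image Prod.fst ∈ F)).filter
      (fun S' => S'.image Prod.fst = A)
      = Finset.univ.filter (fun S' : Finset (α × Fin k) => S'.image Prod.fst = A) := by
    rw [Finset.filter_filter]
    apply Finset.filter_congr
    intro S' _
    constructor
    · exact fun h => h.2
    · exact fun h => ⟨h ▸ hA, h⟩
  rw [hfilter, fiber_sum]
  simp [sub_sub_cancel]

section Structural

variable [Fintype α] [DecidableEq α] {F : Finset (Finset α)} {k : ℕ}

lemma empty_not_mem_of (hinc : IncreasingFam F) (hnu : F ≠ Finset.univ) : ∅ ∉ F := by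
  intro h
  apply hnu
  ext B
  simp only [Finset.mem_univ, iff_true]
  exact hinc ∅ h B (Finset.empty_subset B)

lemma clone_increasing (hinc : IncreasingFam F) : IncreasingFam (clone k F) := by
  intro S hS T hST
  simp only [clone, Finset.mem_filter, Finset.mem_univ, true_and] at hS ⊢
  exact hinc _ hS _ (Finset.image_subset_image hST)

lemma clone_nontrivial (hk : 1 ≤ k) (hinc : IncreasingFam F) (hnt : NontrivialFam F) :
    NontrivialFam (clone k F) := by
  obtain ⟨hne, hnu⟩ := hnt
  constructor
  · obtain ⟨A, hA⟩ := Finset.nonempty_iff_ne_empty.mpr hne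
    have huniv : (Finset.univ : Finset (α × Fin k)).image Prod.fst = Finset.univ := by
      ext a
      simp only [Finset.mem_image, Finset.mem_univ, true_and, iff_true]
      exact ⟨(a, ⟨0, hk⟩), rfl⟩
    have : (Finset.univ : Finset (α × Fin k)) ∈ clone k F := by
      simp only [clone, Finset.mem_filter, Finset.mem_univ, true_and, huniv]
      exact hinc A hA _ (Finset.subset_univ A)
    exact Finset.nonempty_iff_ne_empty.mp ⟨_, this⟩
  · intro h
    have : (∅ : Finset (α × Fin k)) ∈ clone k F := h ▸ Finset.mem_univ _
    simp only [clone, Finset.mem_filter, Finset.mem_univ, true_and, Finset.image_empty] at this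
    exact empty_not_mem_of hinc hnu this

lemma ell_le_ell_clone (hk : 1 ≤ k) (hl : 2 ≤ ell F) : ell F ≤ ell (clone k F) := by
  -- find a minimal element of maximal size
  have hne : (F.filter (fun A => ∀ B ⊂ A, B ∉ F)).Nonempty := by
    rw [Finset.nonempty_iff_ne_empty]
    intro h
    rw [ell, h] at hl
    simp at hl
  obtain ⟨A, hAmem, hAcard⟩ := Finset.exists_mem_eq_sup _ hne Finset.card
  rw [Finset.mem_filter] at hAmem
  obtain ⟨hAF, hAmin⟩ := hAmem
  set j0 : Fin k := ⟨0, hk⟩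
  set L : Finset (α × Fin k) := A.image (fun a => (a, j0)) with hL
  have hinj : Function.Injective (fun a : α => (a, j0)) := fun a b hab => congrArg Prod.fst hab
  have hLcard : L.card = A.card := Finset.card_image_of_injective _ hinj
  have hLim : L.image Prod.fst = A := by
    rw [hL, Finset.image_image]
    ext a; simp
  have hLclone : L ∈ clone k F := by
    simp only [clone, Finset.mem_filter, Finset.mem_univ, true_and, hLim]
    exact hAF
  have hLmin : ∀ B ⊂ L, B ∉ clone k F := by
    intro B hB hBclone
    simp only [clone, Finset.mem_filter, Finset.mem_univ, true_and] at hBclone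
    have hBsub : B.image Prod.fst ⊆ A := hLim ▸ Finset.image_subset_image hB.subset
    have hBne : B.image Prod.fst ≠ A := by
      intro hEq
      have h1 : A.card ≤ B.card := by
        rw [← hEq]
        exact Finset.card_image_le
      have h2 : B.card < L.card := Finset.card_lt_card hB
      omega
    exact hAmin _ (ssubset_of_subset_of_ne hBsub hBne) hBclone
  have h1 : ell F = L.card := by rw [hLcard]; exact hAcard
  rw [h1]
  exact Finset.le_sup (Finset.mem_filter.mpr ⟨hLclone, hLmin⟩)

lemma ell_clone_le : ell (clone k F) ≤ ell F := by
  apply Finset.sup_le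
  intro S' hS'
  rw [Finset.mem_filter] at hS'
  obtain ⟨hS'c, hS'min⟩ := hS'
  simp only [clone, Finset.mem_filter, Finset.mem_univ, true_and] at hS'c
  set T := S'.image Prod.fst with hT
  -- injectivity of fst on S'
  have hinj : Set.InjOn Prod.fst (S' : Set (α × Fin k)) := by
    intro x hx y hy hxy
    by_contra hne
    have hsub : S'.erase x ⊂ S' := Finset.erase_ssubset (Finset.mem_coe.mp hx)
    apply hS'min _ hsub
    simp only [clone, Finset.mem_filter, Finset.mem_univ, true_and]
    have : (S'.erase x).image Prod.fst = T := by
      apply Finset.Subset.antisymm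
      · exact Finset.image_subset_image (Finset.erase_subset _ _)
      · intro a ha
        rw [hT] at ha
        obtain ⟨z, hz, hza⟩ := Finset.mem_image.mp ha
        by_cases hzx : z = x
        · refine Finset.mem_image.mpr ⟨y, Finset.mem_erase.mpr ⟨fun h => hne h.symm, Finset.mem_coe.mp hy⟩, ?_⟩
          rw [← hxy, ← hza, hzx]
        · exact Finset.mem_image.mpr ⟨z, Finset.mem_erase.mpr ⟨hzx, hz⟩, hza⟩
    rw [this]
    exact hS'c
  have hcardT : S'.card = T.card := (Finset.card_image_of_injOn hinj).symm
  -- T is minimal in F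
  have hTmin : ∀ B ⊂ T, B ∉ F := by
    intro B hB hBF
    set S'' := S'.filter (fun x => x.1 ∈ B) with hS''
    have hsub : S'' ⊂ S' := by
      refine Finset.ssubset_iff_subset_ne.mpr ⟨Finset.filter_subset _ _, ?_⟩
      intro hEq
      apply hB.ne
      apply Finset.Subset.antisymm hB.subset
      intro a ha
      obtain ⟨z, hz, hza⟩ := Finset.mem_image.mp ha
      rw [← hEq] at hz
      exact hza ▸ (Finset.mem_filter.mp hz).2
    apply hS'min _ hsub
    simp only [clone, Finset.mem_filter, Finset.mem_univ, true_and]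
    have : S''.image Prod.fst = B := by
      apply Finset.Subset.antisymm
      · intro a ha
        obtain ⟨z, hz, hza⟩ := Finset.mem_image.mp ha
        exact hza ▸ (Finset.mem_filter.mp hz).2
      · intro b hb
        have hbT : b ∈ T := hB.subset hb
        rw [hT] at hbT
        obtain ⟨z, hz, hzb⟩ := Finset.mem_image.mp hbT
        exact Finset.mem_image.mpr ⟨z, Finset.mem_filter.mpr ⟨hz, hzb ▸ hb⟩, hzb⟩
    rw [this]
    exact hBF
  have hTmem : T ∈ F.filter (fun A => ∀ B ⊂ A, B ∉ F) := Finset.mem_filter.mpr ⟨hS'c, hTmin⟩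
  rw [hcardT]
  exact Finset.le_sup hTmem

end Structural

section Cover

variable [Fintype α] [DecidableEq α]

omit [Fintype α] in
lemma sum_image_le {β : Type*} [DecidableEq β] (s : Finset β) (g : β → Finset α)
    (f : Finset α → ℝ) (hf : ∀ T, 0 ≤ f T) :
    ∑ T ∈ s.image g, f T ≤ ∑ x ∈ s, f (g x) := by
  rw [← Finset.sum_fiberwise_of_maps_to (g := g) (t := s.image g)
    (fun x hx => Finset.mem_image_of_mem g hx) (fun x => f (g x))]
  apply Finset.sum_le_sum
  intro T hT
  obtain ⟨x, hx, hxT⟩ := Finset.mem_image.mp hT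
  have hxmem : x ∈ s.filter (fun y => g y = T) := Finset.mem_filter.mpr ⟨hx, hxT⟩
  calc f T = f (g x) := by rw [hxT]
    _ ≤ ∑ y ∈ s.filter (fun y => g y = T), f (g y) :=
        Finset.single_le_sum (fun y _ => hf (g y)) hxmem

/-- counting sections whose graph contains `S'` -/
lemma count_graph (k : ℕ) (S' : Finset (α × Fin k)) :
    (Finset.univ.filter (fun σ : α → Fin k =>
      S' ⊆ Finset.univ.filter (fun x : α × Fin k => x.2 = σ x.1))).card * k ^ S'.card
      ≤ k ^ Fintype.card α := by
  classical
  set Φ := Finset.univ.filter (fun σ : α → Fin k =>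
      S' ⊆ Finset.univ.filter (fun x : α × Fin k => x.2 = σ x.1)) with hΦ
  rcases Φ.eq_empty_or_nonempty with hemp | ⟨σ₀, hσ₀⟩
  · rw [hemp]; simp
  · have hσ₀' : ∀ x ∈ S', x.2 = σ₀ x.1 := by
      rw [hΦ, Finset.mem_filter] at hσ₀
      intro x hx
      have := hσ₀.2 hx
      simpa using this
    set T := S'.image Prod.fst with hT
    have hinj : Set.InjOn Prod.fst (S' : Set (α × Fin k)) := by
      intro x hx y hy hxy
      have : x.2 = y.2 := by
        rw [hσ₀' x (Finset.mem_coe.mp hx), hσ₀' y (Finset.mem_coe.mp hy), hxy]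
      exact Prod.ext hxy this
    have hcardT : T.card = S'.card := Finset.card_image_of_injOn hinj
    -- Φ inside a piFinset
    have hsub : Φ ⊆ Fintype.piFinset (fun a : α => if a ∈ T then ({σ₀ a} : Finset (Fin k)) else Finset.univ) := by
      intro σ hσ
      rw [hΦ, Finset.mem_filter] at hσ
      rw [Fintype.mem_piFinset]
      intro a
      by_cases ha : a ∈ T
      · simp only [ha, if_true, Finset.mem_singleton]
        obtain ⟨x, hx, hxa⟩ := Finset.mem_image.mp (hT ▸ ha)
        have h1 : x.2 = σ x.1 := by
          have := hσ.2 hx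
          simpa using this
        rw [← hxa, ← h1, hσ₀' x hx]
      · simp [ha]
    have hpicard : (Fintype.piFinset (fun a : α => if a ∈ T then ({σ₀ a} : Finset (Fin k)) else Finset.univ)).card
        = k ^ (Fintype.card α - T.card) := by
      rw [Fintype.card_piFinset]
      rw [← Finset.prod_filter_mul_prod_filter_not Finset.univ (fun a => a ∈ T)]
      have h1 : ∀ a ∈ Finset.univ.filter (fun a => a ∈ T),
          (if a ∈ T then ({σ₀ a} : Finset (Fin k)) else Finset.univ).card = 1 := by
        intro a ha
        simp only [Finset.mem_filter] at ha
        simp [ha.2]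
      have h2 : ∀ a ∈ Finset.univ.filter (fun a => a ∉ T),
          (if a ∈ T then ({σ₀ a} : Finset (Fin k)) else Finset.univ).card = k := by
        intro a ha
        simp only [Finset.mem_filter] at ha
        simp [ha.2]
      rw [Finset.prod_congr rfl h1, Finset.prod_congr rfl h2]
      simp only [Finset.prod_const, one_pow, one_mul]
      congr 1
      rw [Finset.filter_not, Finset.filter_univ_mem, Finset.card_sdiff_of_subset (Finset.subset_univ T),
        Finset.card_univ]
    have hΦcard : Φ.card ≤ k ^ (Fintype.card α - T.card) := hpicard ▸ Finset.card_le_card hsub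
    calc Φ.card * k ^ S'.card ≤ k ^ (Fintype.card α - T.card) * k ^ S'.card :=
          Nat.mul_le_mul_right _ hΦcard
      _ = k ^ (Fintype.card α - T.card + T.card) := by rw [pow_add, hcardT]
      _ = k ^ Fintype.card α := by
          congr 1
          have : T.card ≤ Fintype.card α := by
            rw [← Finset.card_univ]; exact Finset.card_le_card (Finset.subset_univ T)
          omega

end Cover

section Transfer

variable [Fintype α] [DecidableEq α]

lemma cover_transfer {F : Finset (Finset α)} {k : ℕ} (hk : 1 ≤ k) {q' : ℝ} (hq0 : 0 ≤ q')
    (G' : Finset (Finset (α × Fin k))) (hcov : Covers G' (clone k F))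
    (hcost : cost q' G' ≤ 1 / 2) :
    ∃ G : Finset (Finset α), Covers G F ∧ cost ((k : ℝ) * q') G ≤ 1 / 2 := by
  classical
  set N := Fintype.card α with hN
  have hkpos : (0 : ℝ) < k := by exact_mod_cast hk
  -- graph of a section
  set Γ : (α → Fin k) → Finset (α × Fin k) :=
    fun σ => Finset.univ.filter (fun x : α × Fin k => x.2 = σ x.1) with hΓ
  set Gs : (α → Fin k) → Finset (Finset α) :=
    fun σ => (G'.filter (fun S' => S' ⊆ Γ σ)).image (Finset.image Prod.fst) with hGs
  -- each Gs σ covers F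
  have hcovs : ∀ σ, Covers (Gs σ) F := by
    intro σ A hA
    set Aσ : Finset (α × Fin k) := A.image (fun a => (a, σ a)) with hAσ
    have hAσim : Aσ.image Prod.fst = A := by
      rw [hAσ, Finset.image_image]; ext a; simp
    have hAσclone : Aσ ∈ clone k F := by
      simp only [clone, Finset.mem_filter, Finset.mem_univ, true_and, hAσim]; exact hA
    obtain ⟨S', hS'G, hS'sub⟩ := hcov Aσ hAσclone
    have hS'Γ : S' ⊆ Γ σ := by
      intro x hx
      have := hS'sub hx
      rw [hAσ] at this
      obtain ⟨a, _, hax⟩ := Finset.mem_image.mp this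
      rw [hΓ, Finset.mem_filter]
      exact ⟨Finset.mem_univ _, by rw [← hax]⟩
    refine ⟨S'.image Prod.fst, Finset.mem_image_of_mem _ (Finset.mem_filter.mpr ⟨hS'G, hS'Γ⟩), ?_⟩
    calc S'.image Prod.fst ⊆ Aσ.image Prod.fst := Finset.image_subset_image hS'sub
      _ = A := hAσim
  -- average cost bound
  have havg : ∑ σ : α → Fin k, cost ((k : ℝ) * q') (Gs σ) ≤ (k : ℝ) ^ N * (1 / 2) := by
    have hterm : ∀ σ : α → Fin k, cost ((k : ℝ) * q') (Gs σ)
        ≤ ∑ S' ∈ G'.filter (fun S' => S' ⊆ Γ σ), ((k : ℝ) * q') ^ S'.card := by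
      intro σ
      have h1 : cost ((k : ℝ) * q') (Gs σ)
          ≤ ∑ S' ∈ G'.filter (fun S' => S' ⊆ Γ σ), ((k : ℝ) * q') ^ (S'.image Prod.fst).card := by
        apply sum_image_le
        intro T
        positivity
      refine h1.trans (le_of_eq (Finset.sum_congr rfl ?_))
      intro S' hS'
      rw [Finset.mem_filter] at hS'
      congr 1
      apply Finset.card_image_of_injOn
      intro x hx y hy hxy
      have hx2 : x.2 = σ x.1 := by
        have := hS'.2 (Finset.mem_coe.mp hx)
        rw [hΓ, Finset.mem_filter] at this
        exact this.2
      have hy2 : y.2 = σ y.1 := by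
        have := hS'.2 (Finset.mem_coe.mp hy)
        rw [hΓ, Finset.mem_filter] at this
        exact this.2
      exact Prod.ext hxy (by rw [hx2, hy2, hxy])
    calc ∑ σ : α → Fin k, cost ((k : ℝ) * q') (Gs σ)
        ≤ ∑ σ : α → Fin k, ∑ S' ∈ G'.filter (fun S' => S' ⊆ Γ σ), ((k : ℝ) * q') ^ S'.card :=
          Finset.sum_le_sum (fun σ _ => hterm σ)
      _ = ∑ S' ∈ G', ((Finset.univ.filter (fun σ : α → Fin k => S' ⊆ Γ σ)).card : ℝ)
            * ((k : ℝ) * q') ^ S'.card := by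
          simp only [Finset.sum_filter]
          rw [Finset.sum_comm]
          apply Finset.sum_congr rfl
          intro S' _
          rw [← Finset.sum_filter, Finset.sum_const, nsmul_eq_mul]
      _ ≤ ∑ S' ∈ G', (k : ℝ) ^ N * q' ^ S'.card := by
          apply Finset.sum_le_sum
          intro S' _
          have hcount := count_graph k S'
          have hcount' : ((Finset.univ.filter (fun σ : α → Fin k => S' ⊆ Γ σ)).card : ℝ)
              * (k : ℝ) ^ S'.card ≤ (k : ℝ) ^ N := by
            rw [hN]
            exact_mod_cast hcount
          have hq'pow : (0 : ℝ) ≤ q' ^ S'.card := by positivity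
          calc ((Finset.univ.filter (fun σ : α → Fin k => S' ⊆ Γ σ)).card : ℝ)
                * ((k : ℝ) * q') ^ S'.card
              = (((Finset.univ.filter (fun σ : α → Fin k => S' ⊆ Γ σ)).card : ℝ)
                * (k : ℝ) ^ S'.card) * q' ^ S'.card := by rw [mul_pow]; ring
            _ ≤ (k : ℝ) ^ N * q' ^ S'.card := mul_le_mul_of_nonneg_right hcount' hq'pow
      _ = (k : ℝ) ^ N * cost q' G' := by rw [cost, Finset.mul_sum]
      _ ≤ (k : ℝ) ^ N * (1 / 2) := by
          apply mul_le_mul_of_nonneg_left hcost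
          positivity
  -- pick a good σ
  have hnonempty : (Finset.univ : Finset (α → Fin k)).Nonempty := by
    have : Nonempty (α → Fin k) := ⟨fun _ => ⟨0, hk⟩⟩
    exact Finset.univ_nonempty
  have htot : (k : ℝ) ^ N * (1 / 2) = ∑ _σ : α → Fin k, (1 / 2 : ℝ) := by
    rw [Finset.sum_const, nsmul_eq_mul, Finset.card_univ, Fintype.card_fun]
    simp [hN, mul_comm]
  obtain ⟨σ, _, hσ⟩ := Finset.exists_le_of_sum_le hnonempty (havg.trans_eq htot)
  exact ⟨Gs σ, hcovs σ, hσ⟩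

end Transfer

section QC

variable [Fintype α] [DecidableEq α]

lemma qc_bddAbove (F : Finset (Finset α)) : BddAbove {q : ℝ | q ∈ Set.Icc (0 : ℝ) 1 ∧
    ∃ G : Finset (Finset α), Covers G F ∧ cost q G ≤ 1 / 2} :=
  ⟨1, fun q hq => hq.1.2⟩

lemma zero_mem_qcSet {F : Finset (Finset α)} (hinc : IncreasingFam F) (hnt : NontrivialFam F) :
    (0 : ℝ) ∈ {q : ℝ | q ∈ Set.Icc (0 : ℝ) 1 ∧
      ∃ G : Finset (Finset α), Covers G F ∧ cost q G ≤ 1 / 2} := by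
  refine ⟨⟨le_refl 0, zero_le_one⟩, F, fun A hA => ⟨A, hA, Finset.Subset.refl A⟩, ?_⟩
  have : cost (0 : ℝ) F = 0 := by
    rw [cost]
    apply Finset.sum_eq_zero
    intro A hA
    have hAne : A ≠ ∅ := by
      intro h
      exact empty_not_mem_of hinc hnt.2 (h ▸ hA)
    have : A.card ≠ 0 := fun h => hAne (Finset.card_eq_zero.mp h)
    exact zero_pow this
  rw [this]
  norm_num

lemma qc_nonneg_s16 {F : Finset (Finset α)} (hinc : IncreasingFam F) (hnt : NontrivialFam F) :
    0 ≤ qc F :=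
  le_csSup (qc_bddAbove F) (zero_mem_qcSet hinc hnt)

lemma qc_clone_le {F : Finset (Finset α)} {k : ℕ} (hk : 1 ≤ k)
    (hinc : IncreasingFam F) (hnt : NontrivialFam F) :
    qc (clone k F) ≤ qc F / k := by
  have hkpos : (0 : ℝ) < k := by exact_mod_cast hk
  rw [qc]
  apply csSup_le
  · exact ⟨0, zero_mem_qcSet (clone_increasing hinc) (clone_nontrivial hk hinc hnt)⟩
  · rintro q' ⟨⟨hq0, hq1⟩, G', hcov', hcost'⟩
    obtain ⟨G, hcovG, hcostG⟩ := cover_transfer hk hq0 G' hcov' hcost'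
    -- k q' is admissible for F
    have hkq1 : (k : ℝ) * q' ≤ 1 := by
      by_contra hgt
      push_neg at hgt
      obtain ⟨A₀, hA₀⟩ := Finset.nonempty_iff_ne_empty.mpr hnt.1
      obtain ⟨T₀, hT₀G, hT₀sub⟩ := hcovG A₀ hA₀
      have hT₀ne : T₀.card ≠ 0 := by
        intro h
        have hT₀ : T₀ = ∅ := Finset.card_eq_zero.mp h
        have h1 : (1 : ℝ) ≤ cost ((k : ℝ) * q') G := by
          rw [cost]
          have : ((k : ℝ) * q') ^ T₀.card = 1 := by rw [hT₀]; simp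
          calc (1 : ℝ) = ((k : ℝ) * q') ^ T₀.card := this.symm
            _ ≤ ∑ S ∈ G, ((k : ℝ) * q') ^ S.card :=
              Finset.single_le_sum (f := fun S => ((k : ℝ) * q') ^ S.card)
                (fun S _ => by positivity) hT₀G
        linarith
      have h1 : (1 : ℝ) < ((k : ℝ) * q') ^ T₀.card := by
        apply one_lt_pow₀ hgt hT₀ne
      have h2 : ((k : ℝ) * q') ^ T₀.card ≤ cost ((k : ℝ) * q') G := by
        rw [cost]
        exact Finset.single_le_sum (f := fun S => ((k : ℝ) * q') ^ S.card)
          (fun S _ => by positivity) hT₀G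
      linarith
    have hmem : (k : ℝ) * q' ∈ {q : ℝ | q ∈ Set.Icc (0 : ℝ) 1 ∧
        ∃ G : Finset (Finset α), Covers G F ∧ cost q G ≤ 1 / 2} :=
      ⟨⟨by positivity, hkq1⟩, G, hcovG, hcostG⟩
    have : (k : ℝ) * q' ≤ qc F := le_csSup (qc_bddAbove F) hmem
    rw [le_div_iff₀ hkpos]
    linarith [this]

end QC

universe u

theorem stmt16 {α : Type u} [Fintype α] [DecidableEq α] (K : ℝ)
    (hPP : ∀ (β : Type u) [Fintype β] [DecidableEq β] (G : Finset (Finset β)),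
      IncreasingFam G → NontrivialFam G → 2 ≤ ell G →
      ∀ p ∈ Set.Ioo (0 : ℝ) 1, probMem p G = 1 / 2 →
        p ≤ K * qc G * Real.logb 2 (ell G))
    (F : Finset (Finset α)) (hinc : IncreasingFam F) (hnt : NontrivialFam F)
    (hl : 2 ≤ ell F)
    (p : ℝ) (hp : p ∈ Set.Ioo (0 : ℝ) 1) (hpc : probMem p F = 1 / 2) :
    p ≤ 1 - Real.exp (-(K * qc F * Real.logb 2 (ell F))) := by
  obtain ⟨hp0, hp1⟩ := hp
  set L : ℝ := Real.logb 2 (ell F) with hLdef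
  set c : ℝ := K * qc F * L with hcdef
  have hpc' : p ≤ c := hPP α F hinc hnt hl p ⟨hp0, hp1⟩ hpc
  have hcpos : 0 < c := lt_of_lt_of_le hp0 hpc'
  have hLpos : 0 < L := by
    rw [hLdef]
    apply Real.logb_pos (by norm_num)
    exact_mod_cast lt_of_lt_of_le one_lt_two hl
  have hqcF : 0 ≤ qc F := qc_nonneg_s16 hinc hnt
  have hKqc : 0 < K * qc F := by nlinarith
  have hqcFpos : 0 < qc F := by
    rcases hqcF.lt_or_eq with h | h
    · exact h
    · exfalso; rw [← h] at hKqc; simp at hKqc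
  have hK : 0 < K := by
    by_contra h
    push_neg at h
    nlinarith
  -- key inequality for large k
  have key : ∀ k : ℕ, max 1 ⌈c⌉₊ ≤ k → (1 + -c / (k : ℝ)) ^ k ≤ 1 - p := by
    intro k hkmax
    have hk1 : 1 ≤ k := le_trans (le_max_left _ _) hkmax
    have hkpos : (0 : ℝ) < k := by exact_mod_cast hk1
    have hck : c ≤ (k : ℝ) := by
      have : ⌈c⌉₊ ≤ k := le_trans (le_max_right _ _) hkmax
      calc c ≤ (⌈c⌉₊ : ℝ) := Nat.le_ceil c
        _ ≤ (k : ℝ) := by exact_mod_cast this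
    set u : ℝ := (1 - p) ^ ((k : ℝ)⁻¹) with hudef
    have h1p : 0 < 1 - p := by linarith
    have hu0 : 0 < u := Real.rpow_pos_of_pos h1p _
    have hu1 : u < 1 := Real.rpow_lt_one (le_of_lt h1p) (by linarith) (by positivity)
    have huk : u ^ k = 1 - p := by
      rw [hudef, ← Real.rpow_natCast ((1 - p) ^ ((k : ℝ)⁻¹)) k, ← Real.rpow_mul (le_of_lt h1p),
        inv_mul_cancel₀ (ne_of_gt hkpos), Real.rpow_one]
    set pk : ℝ := 1 - u with hpkdef
    have hpk0 : 0 < pk := by rw [hpkdef]; linarith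
    have hpk1 : pk < 1 := by rw [hpkdef]; linarith
    have hprob : probMem pk (clone k F) = 1 / 2 := by
      rw [probMem_clone]
      have h1 : 1 - (1 - pk) ^ k = p := by
        have h2 : 1 - pk = u := by rw [hpkdef]; ring
        rw [h2, huk]; ring
      rw [h1, hpc]
    have hell2 : 2 ≤ ell (clone k F) := le_trans hl (ell_le_ell_clone hk1 hl)
    have hpkle := hPP (α × Fin k) (clone k F) (clone_increasing hinc)
      (clone_nontrivial hk1 hinc hnt) hell2 pk ⟨hpk0, hpk1⟩ hprob
    have hellEq : ell (clone k F) = ell F :=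
      le_antisymm ell_clone_le (ell_le_ell_clone hk1 hl)
    rw [hellEq, ← hLdef] at hpkle
    have hqcc : qc (clone k F) ≤ qc F / k := qc_clone_le hk1 hinc hnt
    have hchain : K * qc (clone k F) * L ≤ c / k := by
      have h1 : K * qc (clone k F) ≤ K * (qc F / k) :=
        mul_le_mul_of_nonneg_left hqcc (le_of_lt hK)
      have h2 : K * qc (clone k F) * L ≤ K * (qc F / k) * L :=
        mul_le_mul_of_nonneg_right h1 (le_of_lt hLpos)
      have h3 : K * (qc F / k) * L = c / k := by rw [hcdef]; ring
      linarith
    have hpkc : pk ≤ c / k := le_trans hpkle hchain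
    have h0 : 0 ≤ 1 + -c / (k : ℝ) := by
      have : c / k ≤ 1 := (div_le_one hkpos).mpr hck
      have : -c / (k : ℝ) = -(c / k) := by ring
      linarith [(div_le_one hkpos).mpr hck, this]
    have hle : 1 + -c / (k : ℝ) ≤ u := by
      have : -c / (k : ℝ) = -(c / k) := by ring
      rw [this]
      have : 1 - pk = u := by rw [hpkdef]; ring
      linarith
    calc (1 + -c / (k : ℝ)) ^ k ≤ u ^ k := pow_le_pow_left₀ h0 hle k
      _ = 1 - p := huk
  have hexp : Real.exp (-c) ≤ 1 - p := by
    apply le_of_tendsto (Real.tendsto_one_add_div_pow_exp (-c))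
    exact Filter.eventually_atTop.mpr ⟨max 1 ⌈c⌉₊, key⟩
  linarith
end
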